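/- Let G be a finite abelian group of order v. Suppose {D_0,D_1,D_2,D_3} is a symmetric difference family of type H in G satisfying (d2) (with witness sets E_0, E_1) and (d5) (|D_0|+|D_3| = |D_1|+|D_2|). With I_0 = {1,2}, I_1 = {3,4}, I_2 = {2,4}, I_3 = {1,3} ⊆ ℤ/5ℤ, define: B_0 = D_0×I_0 ∪ (G∖D_2)×I_1 ∪ (G*∖E_0)×{0}, B_1 = D_3×I_0 ∪ (G∖D_1)×I_1 ∪ (G*∖E_1)×{0}, B_2 = (G∖D_0)×I_2 ∪ D_2×I_3 ∪ E_0×{0}, B_3 = (G∖D_3)×I_2 ∪ D_1×I_3 ∪ E_1×{0}. Then {B_0,B_1,B_2,B_3} is a difference family of type H_4* in G × ℤ/5ℤ; concretely Σ_{i=0}^{3} B_i·B_i^{(−1)} = (10v−2)·0 + (5v−3)·(G×ℤ/5ℤ)* in ℤ[G×ℤ/5ℤ]. -/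

import Mathlib

open Finset

noncomputable section

variable {G : Type*}

/-- The element of the group ring `ℤ[G]` associated to a finite subset `D ⊆ G`. -/
def grp [AddCommGroup G] [DecidableEq G] (D : Finset G) : AddMonoidAlgebra ℤ G :=
  ∑ x ∈ D, AddMonoidAlgebra.single x 1

/-- `D^{(-1)} = {-x : x ∈ D}`. -/
def negSet [AddCommGroup G] [DecidableEq G] (D : Finset G) : Finset G :=
  D.image (fun x => -x)

/-- A subset is symmetric if `D = -D`. -/
def IsSymmetric [AddCommGroup G] [DecidableEq G] (D : Finset G) : Prop :=
  negSet D = D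

/-- `G* = G \ {0}` as a finset. -/
def Gstar (G : Type*) [AddCommGroup G] [Fintype G] [DecidableEq G] : Finset G :=
  Finset.univ \ {0}

/-- A difference family of type `H`: four blocks with `λ = Σ|D_i| - |G|`. -/
def IsTypeH [AddCommGroup G] [Fintype G] [DecidableEq G] (D : Fin 4 → Finset G) : Prop :=
  ∑ i, grp (D i) * grp (negSet (D i)) =
    ((∑ i, ((D i).card : ℤ)) - (Fintype.card G : ℤ)) • grp (Finset.univ : Finset G)
      + (Fintype.card G : ℤ) • AddMonoidAlgebra.single (0 : G) (1 : ℤ)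

/-- A difference family of type `H_4^*`: four blocks with `λ = Σ|B_i| - (|G|+1)`. -/
def IsTypeH4star [AddCommGroup G] [Fintype G] [DecidableEq G] (B : Fin 4 → Finset G) : Prop :=
  ∑ i, grp (B i) * grp (negSet (B i)) =
    ((∑ i, ((B i).card : ℤ)) - ((Fintype.card G : ℤ) + 1)) • grp (Finset.univ : Finset G)
      + ((Fintype.card G : ℤ) + 1) • AddMonoidAlgebra.single (0 : G) (1 : ℤ)

/-- A difference family of type `H_2^*`: two blocks with `λ = Σ|S_i| - (|G|+1)/2`. -/
def IsTypeH2star [AddCommGroup G] [Fintype G] [DecidableEq G] (S : Fin 2 → Finset G) : Prop :=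
  ∑ i, grp (S i) * grp (negSet (S i)) =
    ((∑ i, ((S i).card : ℤ)) - ((Fintype.card G : ℤ) + 1) / 2) • grp (Finset.univ : Finset G)
      + (((Fintype.card G : ℤ) + 1) / 2) • AddMonoidAlgebra.single (0 : G) (1 : ℤ)

/-- Condition (d3). -/
def CondD3 [AddCommGroup G] [Fintype G] [DecidableEq G] (D : Fin 4 → Finset G) : Prop :=
  grp (D 0) * grp (negSet (D 2)) + grp (D 2) * grp (negSet (D 0))
    + grp (D 1) * grp (negSet (D 3)) + grp (D 3) * grp (negSet (D 1)) =
    ((∑ i, ((D i).card : ℤ)) - (Fintype.card G : ℤ) + 1) • grp (Finset.univ : Finset G)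

/-- Condition (c1). -/
def CondC1 [AddCommGroup G] [Fintype G] [DecidableEq G] (S : Fin 4 → Finset G) : Prop :=
  grp (S 0) * grp (negSet (S 2)) + grp (S 2) * grp (negSet (S 0))
    + grp (S 1) * grp (negSet (S 3)) + grp (S 3) * grp (negSet (S 1)) =
    ((∑ i, ((S i).card : ℤ)) - (Fintype.card G : ℤ)) • grp (Finset.univ : Finset G)

/-- Condition (d2). -/
def CondD2 [AddCommGroup G] [Fintype G] [DecidableEq G] (D : Fin 4 → Finset G) : Prop :=
  ∃ E₀ E₁ : Finset G, E₀ ⊆ Gstar G ∧ E₁ ⊆ Gstar G ∧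
    grp (D 0) + grp (D 1) - grp (D 2) - grp (D 3) = grp E₀ - grp (Gstar G \ E₀) ∧
    grp (D 0) + grp (D 3) - grp (D 1) - grp (D 2) = grp E₁ - grp (Gstar G \ E₁) ∧
    IsTypeH4star ![E₀, E₁, Gstar G \ E₀, Gstar G \ E₁]

/-- A building family: eight symmetric, pairwise disjoint subsets partitioning `G*`,
satisfying (a3) and (a4). -/
def IsBuildingFamily [AddCommGroup G] [Fintype G] [DecidableEq G] (A : Fin 8 → Finset G) : Prop :=
  (∀ i, IsSymmetric (A i)) ∧
  (∀ i j, i ≠ j → Disjoint (A i) (A j)) ∧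
  (Finset.univ.biUnion A = Gstar G) ∧
  IsTypeH4star ![A 0 ∪ A 1 ∪ A 6 ∪ A 7, A 2 ∪ A 3 ∪ A 4 ∪ A 5,
    A 0 ∪ A 3 ∪ A 5 ∪ A 6, A 1 ∪ A 2 ∪ A 4 ∪ A 7] ∧
  (∑ i, grp (A i) * grp (A i)) - (∑ i, grp (A i) * grp (A (i + 4))) =
    ((Fintype.card G : ℤ) - 1) • AddMonoidAlgebra.single (0 : G) (1 : ℤ)
      + ((grp (A 0) + grp (A 1) + grp (A 2) + grp (A 3))
        - (grp (A 4) + grp (A 5) + grp (A 6) + grp (A 7)))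

end

/-!
Work in `ℤ[G × ℤ/5]`: write `g`, `dᵢ`, `eⱼ` for the images of `G`, `Dᵢ`, `Eⱼ` under `x ↦ (x, 0)`
and `u` for `(0, 1)`, so that `u⁵ = 1`. All the sets involved are symmetric, so each `Bᵢ Bᵢ^(-1)` has
the shape `(a s + b s' + c)(a s' + b s + c)` with `{s, s'} = {u + u², u³ + u⁴}` or `{u² + u⁴, u + u³}`,
and modulo `u⁵ = 1` it only has coefficients at `1`, `u + u⁴` and `u² + u³`. Summed over the four
blocks, these coefficients are quadratic expressions in `g, dᵢ, eⱼ` which `g x = |x| g`, the type-`H`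
identity for the `Dᵢ`, the type-`H₄*` identity for the `Eⱼ` and the two linear relations of (d2)
reduce to `(5v - 3) g + (5v + 1)`, `(5v - 3) g` and `(5v - 3) g`. Hence the sum is
`(10v - 2)·0 + (5v - 3)·(G × ℤ/5)*`.
-/

open AddMonoidAlgebra

section GroupRing

variable {G : Type*} [AddCommGroup G] [DecidableEq G]

theorem grp_union {A B : Finset G} (h : Disjoint A B) : grp (A ∪ B) = grp A + grp B :=
  sum_union h

theorem grp_singleton (a : G) : grp {a} = single a 1 :=
  sum_singleton _ _

theorem grp_sdiff {A B : Finset G} (h : B ⊆ A) : grp (A \ B) = grp A - grp B :=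
  sum_sdiff_eq_sub h

theorem negSet_union (A B : Finset G) : negSet (A ∪ B) = negSet A ∪ negSet B :=
  image_union A B

theorem negSet_sdiff (A B : Finset G) : negSet (A \ B) = negSet A \ negSet B :=
  image_sdiff A B neg_injective

theorem IsSymmetric.negSet_eq {A : Finset G} (h : IsSymmetric A) : negSet A = A := h

theorem IsSymmetric.sdiff {A B : Finset G} (hA : IsSymmetric A) (hB : IsSymmetric B) :
    IsSymmetric (A \ B) := by
  rw [IsSymmetric, negSet_sdiff, hA.negSet_eq, hB.negSet_eq]

variable [Fintype G]

theorem isSymmetric_univ : IsSymmetric (univ : Finset G) :=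
  eq_univ_of_forall fun x => mem_image.2 ⟨-x, mem_univ _, neg_neg x⟩

theorem isSymmetric_Gstar : IsSymmetric (Gstar G) :=
  isSymmetric_univ.sdiff (by simp [IsSymmetric, negSet])

theorem IsSymmetric.univ_sdiff {A : Finset G} (hA : IsSymmetric A) : IsSymmetric (univ \ A) :=
  isSymmetric_univ.sdiff hA

theorem IsSymmetric.Gstar_sdiff {E : Finset G} (hE : IsSymmetric E) : IsSymmetric (Gstar G \ E) :=
  isSymmetric_Gstar.sdiff hE

theorem grp_univ_mul (A : Finset G) : grp univ * grp A = (#A : ℤ) • grp (univ : Finset G) := by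
  have translate (a : G) : grp univ * single a 1 = grp (univ : Finset G) := by
    simp only [grp, sum_mul, single_mul_single, one_mul]
    exact Fintype.sum_equiv (Equiv.addRight a) _ _ fun _ => rfl
  simp only [grp, mul_sum] at translate ⊢
  simp [translate]

theorem grp_univ_sdiff (A : Finset G) : grp (univ \ A) = grp univ - grp A :=
  grp_sdiff (subset_univ A)

theorem grp_Gstar : grp (Gstar G) = grp univ - 1 := by
  rw [Gstar, grp_sdiff (subset_univ _), grp_singleton, one_def]

theorem grp_Gstar_sdiff {E : Finset G} (hE : E ⊆ Gstar G) :
    grp (Gstar G \ E) = grp univ - 1 - grp E := by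
  rw [grp_sdiff hE, grp_Gstar]

theorem card_Gstar_add_one : #(Gstar G) + 1 = Fintype.card G := by
  rw [Gstar, card_univ_sdiff, card_singleton,
    Nat.sub_add_cancel (Fintype.card_pos_iff.2 ⟨0⟩)]

theorem IsTypeH.sum_mul_self {D : Fin 4 → Finset G} (hH : IsTypeH D)
    (hsym : ∀ i, IsSymmetric (D i)) :
    grp (D 0) * grp (D 0) + grp (D 1) * grp (D 1) + grp (D 2) * grp (D 2) + grp (D 3) * grp (D 3) =
      ((∑ i, (#(D i) : ℤ)) - Fintype.card G) • grp univ + (Fintype.card G : ℤ) • 1 := by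
  rw [IsTypeH, Fin.sum_univ_four, ← one_def] at hH
  simpa only [(hsym _).negSet_eq] using hH

theorem IsTypeH4star.sum_mul_self_of_compl {E₀ E₁ : Finset G}
    (h : IsTypeH4star ![E₀, E₁, Gstar G \ E₀, Gstar G \ E₁])
    (hE₀s : IsSymmetric E₀) (hE₁s : IsSymmetric E₁) (hE₀ : E₀ ⊆ Gstar G) (hE₁ : E₁ ⊆ Gstar G) :
    grp E₀ * grp E₀ + grp E₁ * grp E₁ + (grp univ - 1 - grp E₀) * (grp univ - 1 - grp E₀)
        + (grp univ - 1 - grp E₁) * (grp univ - 1 - grp E₁) =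
      ((Fintype.card G : ℤ) - 3) • grp univ + ((Fintype.card G : ℤ) + 1) • 1 := by
  have hcard : (#E₀ + #E₁ + #(Gstar G \ E₀) + #(Gstar G \ E₁) : ℤ)
      - (Fintype.card G + 1) = Fintype.card G - 3 := by
    have := card_sdiff_add_card_eq_card hE₀
    have := card_sdiff_add_card_eq_card hE₁
    have := card_Gstar_add_one (G := G)
    omega
  rw [IsTypeH4star, ← one_def] at h
  simp only [Fin.sum_univ_four, Matrix.cons_val_zero, Matrix.cons_val_one, Matrix.cons_val_two,
    Matrix.cons_val_three, Matrix.head_cons, Matrix.tail_cons] at h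
  rwa [hE₀s.negSet_eq, hE₁s.negSet_eq, hE₀s.Gstar_sdiff.negSet_eq, hE₁s.Gstar_sdiff.negSet_eq,
    grp_Gstar_sdiff hE₀, grp_Gstar_sdiff hE₁, hcard] at h

theorem isTypeH4star_of_sum_eq {B : Fin 4 → Finset G} {a b : ℤ}
    (h : ∑ i, grp (B i) * grp (negSet (B i)) = a • single 0 1 + b • grp (Gstar G))
    (ha : ∑ i, (#(B i) : ℤ) = a) (hb : b = a - (Fintype.card G + 1)) : IsTypeH4star B := by
  rw [IsTypeH4star, h, ha, hb, grp_Gstar, ← one_def]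
  module

end GroupRing

section Product

variable {G H : Type*} [DecidableEq G] [DecidableEq H] {A B C : Finset G} {S T : Finset H}

theorem card_block [Zero H] (hST : Disjoint S T) (hS : 0 ∉ S) (hT : 0 ∉ T) :
    #(A ×ˢ S ∪ B ×ˢ T ∪ C ×ˢ {0}) = #A * #S + #B * #T + #C := by
  have h0 : Disjoint (A ×ˢ S ∪ B ×ˢ T) (C ×ˢ {0}) :=
    disjoint_union_left.2 ⟨disjoint_product.2 (Or.inr (disjoint_singleton_right.2 hS)),
      disjoint_product.2 (Or.inr (disjoint_singleton_right.2 hT))⟩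
  rw [card_union_of_disjoint h0, card_union_of_disjoint (disjoint_product.2 (Or.inr hST)),
    card_product, card_product, card_product, card_singleton, mul_one]

variable [AddCommGroup G] [AddCommGroup H]

theorem negSet_product : negSet (A ×ˢ S) = negSet A ×ˢ negSet S :=
  prodMap_image_product _ _ A S

theorem grp_product :
    grp (A ×ˢ S) = mapDomainRingHom ℤ (AddMonoidHom.inl G H) (grp A)
      * mapDomainRingHom ℤ (AddMonoidHom.inr G H) (grp S) := by
  simp only [grp, map_sum, mapDomainRingHom_apply, mapDomain_single, sum_mul_sum,
    single_mul_single, sum_product, AddMonoidHom.inl_apply, AddMonoidHom.inr_apply,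
    Prod.mk_add_mk, add_zero, zero_add, mul_one]

theorem grp_block (hST : Disjoint S T) (hS : 0 ∉ S) (hT : 0 ∉ T) :
    grp (A ×ˢ S ∪ B ×ˢ T ∪ C ×ˢ {0}) =
      mapDomainRingHom ℤ (AddMonoidHom.inl G H) (grp A)
          * mapDomainRingHom ℤ (AddMonoidHom.inr G H) (grp S)
        + mapDomainRingHom ℤ (AddMonoidHom.inl G H) (grp B)
          * mapDomainRingHom ℤ (AddMonoidHom.inr G H) (grp T)
        + mapDomainRingHom ℤ (AddMonoidHom.inl G H) (grp C) := by
  have h0 : Disjoint (A ×ˢ S ∪ B ×ˢ T) (C ×ˢ {0}) :=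
    disjoint_union_left.2 ⟨disjoint_product.2 (Or.inr (disjoint_singleton_right.2 hS)),
      disjoint_product.2 (Or.inr (disjoint_singleton_right.2 hT))⟩
  rw [grp_union h0, grp_union (disjoint_product.2 (Or.inr hST)), grp_product, grp_product,
    grp_product, grp_singleton, ← one_def, map_one, mul_one]

theorem negSet_block (hA : IsSymmetric A) (hB : IsSymmetric B) (hC : IsSymmetric C) :
    negSet (A ×ˢ S ∪ B ×ˢ T ∪ C ×ˢ {0}) = A ×ˢ negSet S ∪ B ×ˢ negSet T ∪ C ×ˢ {0} := by
  rw [negSet_union, negSet_union, negSet_product, negSet_product, negSet_product,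
    hA.negSet_eq, hB.negSet_eq, hC.negSet_eq]
  simp [negSet]

end Product

section FifthRoots

variable {R : Type*} [CommRing R]

theorem block₁₂_mul_block₃₄ {w : R} (hw : w ^ 5 = 1) (a b c : R) :
    (a * (w + w ^ 2) + b * (w ^ 3 + w ^ 4) + c) * (a * (w ^ 3 + w ^ 4) + b * (w + w ^ 2) + c) =
      2 * (a ^ 2 + b ^ 2) + c ^ 2 + (a ^ 2 + b ^ 2 + a * b + c * (a + b)) * (w + w ^ 4)
        + (3 * (a * b) + c * (a + b)) * (w ^ 2 + w ^ 3) := by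
  linear_combination ((a ^ 2 + b ^ 2) * (2 + w) + a * b * (w + 2 * w ^ 2 + w ^ 3)) * hw

theorem block₂₄_mul_block₁₃ {w : R} (hw : w ^ 5 = 1) (a b c : R) :
    (a * (w ^ 2 + w ^ 4) + b * (w + w ^ 3) + c) * (a * (w + w ^ 3) + b * (w ^ 2 + w ^ 4) + c) =
      2 * (a ^ 2 + b ^ 2) + c ^ 2 + (3 * (a * b) + c * (a + b)) * (w + w ^ 4)
        + (a ^ 2 + b ^ 2 + a * b + c * (a + b)) * (w ^ 2 + w ^ 3) := by
  linear_combination ((a ^ 2 + b ^ 2) * (2 + w ^ 2) + a * b * (3 * w + w ^ 3)) * hw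

theorem sum_block_mul_block_neg {d₀ d₁ d₂ d₃ e₀ e₁ g u : R} {v N : ℤ}
    (hgg : g * g = v • g) (hgD : g * (d₀ + d₁ + d₂ + d₃) = N • g)
    (hD : d₀ * d₀ + d₁ * d₁ + d₂ * d₂ + d₃ * d₃ = (N - v) • g + v • 1)
    (h₁ : d₀ + d₁ - d₂ - d₃ = e₀ - (g - 1 - e₀))
    (h₂ : d₀ + d₃ - d₁ - d₂ = e₁ - (g - 1 - e₁))
    (hE : e₀ * e₀ + e₁ * e₁ + (g - 1 - e₀) * (g - 1 - e₀) + (g - 1 - e₁) * (g - 1 - e₁) =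
      (v - 3) • g + (v + 1) • 1)
    (hu : u ^ 5 = 1) :
    (d₀ * (u + u ^ 2) + (g - d₂) * (u ^ 3 + u ^ 4) + (g - 1 - e₀)) *
        (d₀ * (u ^ 3 + u ^ 4) + (g - d₂) * (u + u ^ 2) + (g - 1 - e₀)) +
      (d₃ * (u + u ^ 2) + (g - d₁) * (u ^ 3 + u ^ 4) + (g - 1 - e₁)) *
        (d₃ * (u ^ 3 + u ^ 4) + (g - d₁) * (u + u ^ 2) + (g - 1 - e₁)) +
      ((g - d₀) * (u ^ 2 + u ^ 4) + d₂ * (u + u ^ 3) + e₀) *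
        ((g - d₀) * (u + u ^ 3) + d₂ * (u ^ 2 + u ^ 4) + e₀) +
      ((g - d₃) * (u ^ 2 + u ^ 4) + d₁ * (u + u ^ 3) + e₁) *
        ((g - d₃) * (u + u ^ 3) + d₁ * (u ^ 2 + u ^ 4) + e₁) =
      (10 * v - 2) • 1 + (5 * v - 3) • (g * (1 + u + u ^ 2 + u ^ 3 + u ^ 4) - 1) := by
  have hcoeff_one : 2 * (d₀ ^ 2 + (g - d₂) ^ 2 + d₃ ^ 2 + (g - d₁) ^ 2
        + (g - d₀) ^ 2 + d₂ ^ 2 + (g - d₃) ^ 2 + d₁ ^ 2)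
      + ((g - 1 - e₀) ^ 2 + (g - 1 - e₁) ^ 2 + e₀ ^ 2 + e₁ ^ 2) =
      (5 * v - 3) • g + (5 * v + 1) • 1 := by
    linear_combination 4 * hD + hE - 4 * hgD + 8 * hgg
  have hcoeff_u : d₀ ^ 2 + (g - d₂) ^ 2 + d₃ ^ 2 + (g - d₁) ^ 2 + (d₀ * (g - d₂) + d₃ * (g - d₁))
      + 3 * ((g - d₀) * d₂ + (g - d₃) * d₁)
      + ((g - 1 - e₀) * (d₀ + (g - d₂)) + (g - 1 - e₁) * (d₃ + (g - d₁))
        + e₀ * ((g - d₀) + d₂) + e₁ * ((g - d₃) + d₁)) = (5 * v - 3) • g := by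
    linear_combination hgD + 3 * hgg + (2 * d₀ - 2 * d₂ + e₀ - e₁) * h₁
      + (1 - 2 * d₁ + 2 * d₃ + e₀ + e₁ - g) * h₂ - hD + hE
  have hcoeff_u_sq : (g - d₀) ^ 2 + d₂ ^ 2 + (g - d₃) ^ 2 + d₁ ^ 2 + ((g - d₀) * d₂ + (g - d₃) * d₁)
      + 3 * (d₀ * (g - d₂) + d₃ * (g - d₁))
      + ((g - 1 - e₀) * (d₀ + (g - d₂)) + (g - 1 - e₁) * (d₃ + (g - d₁))
        + e₀ * ((g - d₀) + d₂) + e₁ * ((g - d₃) + d₁)) = (5 * v - 3) • g := by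
    linear_combination hcoeff_u
  rw [block₁₂_mul_block₃₄ hu, block₁₂_mul_block₃₄ hu, block₂₄_mul_block₁₃ hu,
    block₂₄_mul_block₁₃ hu]
  linear_combination hcoeff_one + (u + u ^ 4) * hcoeff_u + (u ^ 2 + u ^ 3) * hcoeff_u_sq

end FifthRoots

section ZMod5

variable {G : Type*} [AddCommGroup G]

local notation "ω" => single (1 : ZMod 5) (1 : ℤ)
local notation "φ" => mapDomainRingHom ℤ (AddMonoidHom.inl G (ZMod 5))
local notation "ψ" => mapDomainRingHom ℤ (AddMonoidHom.inr G (ZMod 5))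

theorem inr_single_one_pow_five : ψ ω ^ 5 = 1 := by
  rw [← map_pow, single_pow, ← map_one ψ, one_def]
  rfl

variable [DecidableEq G] {A B C : Finset G}

theorem grp_univ_zmod5 : grp (univ : Finset (ZMod 5)) = 1 + ω + ω ^ 2 + ω ^ 3 + ω ^ 4 := by
  rw [show (univ : Finset (ZMod 5)) = {0, 1, 2, 3, 4} by decide]
  simp +decide [grp, single_pow, one_def, add_assoc]

theorem grp_block₁₂_mul_grp_negSet (hA : IsSymmetric A) (hB : IsSymmetric B) (hC : IsSymmetric C) :
    grp (A ×ˢ {1, 2} ∪ B ×ˢ {3, 4} ∪ C ×ˢ {0}) * grp (negSet (A ×ˢ {1, 2} ∪ B ×ˢ {3, 4} ∪ C ×ˢ {0}))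
      = (φ (grp A) * (ψ ω + ψ ω ^ 2) + φ (grp B) * (ψ ω ^ 3 + ψ ω ^ 4) + φ (grp C)) *
        (φ (grp A) * (ψ ω ^ 3 + ψ ω ^ 4) + φ (grp B) * (ψ ω + ψ ω ^ 2) + φ (grp C)) := by
  rw [negSet_block hA hB hC, show negSet ({1, 2} : Finset (ZMod 5)) = {3, 4} by decide,
    show negSet ({3, 4} : Finset (ZMod 5)) = {1, 2} by decide,
    grp_block (by decide) (by decide) (by decide), grp_block (by decide) (by decide) (by decide),
    show grp ({1, 2} : Finset (ZMod 5)) = ω + ω ^ 2 by simp +decide [grp, single_pow],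
    show grp ({3, 4} : Finset (ZMod 5)) = ω ^ 3 + ω ^ 4 by simp +decide [grp, single_pow]]
  simp only [map_add, map_pow]

theorem grp_block₂₄_mul_grp_negSet (hA : IsSymmetric A) (hB : IsSymmetric B) (hC : IsSymmetric C) :
    grp (A ×ˢ {2, 4} ∪ B ×ˢ {1, 3} ∪ C ×ˢ {0}) * grp (negSet (A ×ˢ {2, 4} ∪ B ×ˢ {1, 3} ∪ C ×ˢ {0}))
      = (φ (grp A) * (ψ ω ^ 2 + ψ ω ^ 4) + φ (grp B) * (ψ ω + ψ ω ^ 3) + φ (grp C)) *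
        (φ (grp A) * (ψ ω + ψ ω ^ 3) + φ (grp B) * (ψ ω ^ 2 + ψ ω ^ 4) + φ (grp C)) := by
  rw [negSet_block hA hB hC, show negSet ({2, 4} : Finset (ZMod 5)) = {1, 3} by decide,
    show negSet ({1, 3} : Finset (ZMod 5)) = {2, 4} by decide,
    grp_block (by decide) (by decide) (by decide), grp_block (by decide) (by decide) (by decide),
    show grp ({2, 4} : Finset (ZMod 5)) = ω ^ 2 + ω ^ 4 by simp +decide [grp, single_pow],
    show grp ({1, 3} : Finset (ZMod 5)) = ω + ω ^ 3 by simp +decide [grp, single_pow]]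
  simp only [map_add, map_pow]

theorem card_block₁₂_add_card_block₂₄ [Fintype G] {E : Finset G} (hE : E ⊆ Gstar G) :
    #(A ×ˢ ({1, 2} : Finset (ZMod 5)) ∪ (univ \ B) ×ˢ {3, 4} ∪ (Gstar G \ E) ×ˢ {0})
      + #((univ \ A) ×ˢ ({2, 4} : Finset (ZMod 5)) ∪ B ×ˢ {1, 3} ∪ E ×ˢ {0}) + 1
      = 5 * Fintype.card G := by
  rw [card_block (by decide) (by decide) (by decide),
    card_block (by decide) (by decide) (by decide),
    card_pair (by decide), card_pair (by decide), card_pair (by decide), card_pair (by decide)]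
  have := card_sdiff_add_card_eq_card (subset_univ A)
  have := card_sdiff_add_card_eq_card (subset_univ B)
  have := card_sdiff_add_card_eq_card hE
  have := card_Gstar_add_one (G := G)
  simp only [card_univ] at *
  omega

end ZMod5

theorem product_construction_Z5_general {G : Type*} [AddCommGroup G] [Fintype G] [DecidableEq G]
    (D : Fin 4 → Finset G) (E₀ E₁ : Finset G)
    (hsym : ∀ i, IsSymmetric (D i)) (hH : IsTypeH D)
    (hE₀s : IsSymmetric E₀) (hE₁s : IsSymmetric E₁)
    (hE₀ : E₀ ⊆ Gstar G) (hE₁ : E₁ ⊆ Gstar G)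
    (h1 : grp (D 0) + grp (D 1) - grp (D 2) - grp (D 3) = grp E₀ - grp (Gstar G \ E₀))
    (h2 : grp (D 0) + grp (D 3) - grp (D 1) - grp (D 2) = grp E₁ - grp (Gstar G \ E₁))
    (h3 : IsTypeH4star ![E₀, E₁, Gstar G \ E₀, Gstar G \ E₁]) :
    IsTypeH4star (G := G × ZMod 5)
      ![(D 0) ×ˢ ({1, 2} : Finset (ZMod 5)) ∪ ((Finset.univ : Finset G) \ D 2) ×ˢ {3, 4}
          ∪ (Gstar G \ E₀) ×ˢ {0},
        (D 3) ×ˢ ({1, 2} : Finset (ZMod 5)) ∪ ((Finset.univ : Finset G) \ D 1) ×ˢ {3, 4}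
          ∪ (Gstar G \ E₁) ×ˢ {0},
        ((Finset.univ : Finset G) \ D 0) ×ˢ ({2, 4} : Finset (ZMod 5)) ∪ (D 2) ×ˢ {1, 3}
          ∪ E₀ ×ˢ {0},
        ((Finset.univ : Finset G) \ D 3) ×ˢ ({2, 4} : Finset (ZMod 5)) ∪ (D 1) ×ˢ {1, 3}
          ∪ E₁ ×ˢ {0}] ∧
      ∑ i, grp ((![(D 0) ×ˢ ({1, 2} : Finset (ZMod 5)) ∪ ((Finset.univ : Finset G) \ D 2) ×ˢ {3, 4}
          ∪ (Gstar G \ E₀) ×ˢ {0},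
        (D 3) ×ˢ ({1, 2} : Finset (ZMod 5)) ∪ ((Finset.univ : Finset G) \ D 1) ×ˢ {3, 4}
          ∪ (Gstar G \ E₁) ×ˢ {0},
        ((Finset.univ : Finset G) \ D 0) ×ˢ ({2, 4} : Finset (ZMod 5)) ∪ (D 2) ×ˢ {1, 3}
          ∪ E₀ ×ˢ {0},
        ((Finset.univ : Finset G) \ D 3) ×ˢ ({2, 4} : Finset (ZMod 5)) ∪ (D 1) ×ˢ {1, 3}
          ∪ E₁ ×ˢ {0}]) i) *
        grp (negSet ((![(D 0) ×ˢ ({1, 2} : Finset (ZMod 5)) ∪ ((Finset.univ : Finset G) \ D 2) ×ˢ {3, 4}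
          ∪ (Gstar G \ E₀) ×ˢ {0},
        (D 3) ×ˢ ({1, 2} : Finset (ZMod 5)) ∪ ((Finset.univ : Finset G) \ D 1) ×ˢ {3, 4}
          ∪ (Gstar G \ E₁) ×ˢ {0},
        ((Finset.univ : Finset G) \ D 0) ×ˢ ({2, 4} : Finset (ZMod 5)) ∪ (D 2) ×ˢ {1, 3}
          ∪ E₀ ×ˢ {0},
        ((Finset.univ : Finset G) \ D 3) ×ˢ ({2, 4} : Finset (ZMod 5)) ∪ (D 1) ×ˢ {1, 3}
          ∪ E₁ ×ˢ {0}]) i)) =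
      (10 * (Fintype.card G : ℤ) - 2) • AddMonoidAlgebra.single (0 : G × ZMod 5) (1 : ℤ)
        + (5 * (Fintype.card G : ℤ) - 3) • grp (Gstar (G × ZMod 5)) := by
  have hgg := grp_univ_mul (univ : Finset G)
  have hgD : grp univ * (grp (D 0) + grp (D 1) + grp (D 2) + grp (D 3))
      = (∑ i, (#(D i) : ℤ)) • grp (univ : Finset G) := by
    simp only [mul_add, grp_univ_mul, Fin.sum_univ_four, add_smul]
  have hD := hH.sum_mul_self hsym
  have hE := h3.sum_mul_self_of_compl hE₀s hE₁s hE₀ hE₁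
  apply_fun mapDomainRingHom ℤ (AddMonoidHom.inl G (ZMod 5)) at hgg hgD hD hE h1 h2
  simp only [grp_Gstar_sdiff hE₀, grp_Gstar_sdiff hE₁, card_univ, map_mul, map_add, map_sub,
    map_one, map_zsmul] at hgg hgD hD hE h1 h2
  refine ⟨isTypeH4star_of_sum_eq ?sum ?_ ?_, ?sum⟩
  · simp only [Fin.sum_univ_four, Matrix.cons_val_zero, Matrix.cons_val_one, Matrix.cons_val_two,
      Matrix.cons_val_three, Matrix.head_cons, Matrix.tail_cons]
    rw [grp_block₁₂_mul_grp_negSet (hsym 0) (hsym 2).univ_sdiff hE₀s.Gstar_sdiff,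
      grp_block₁₂_mul_grp_negSet (hsym 3) (hsym 1).univ_sdiff hE₁s.Gstar_sdiff,
      grp_block₂₄_mul_grp_negSet (hsym 0).univ_sdiff (hsym 2) hE₀s,
      grp_block₂₄_mul_grp_negSet (hsym 3).univ_sdiff (hsym 1) hE₁s,
      grp_Gstar, ← univ_product_univ, grp_product, grp_univ_zmod5, ← one_def,
      grp_Gstar_sdiff hE₀, grp_Gstar_sdiff hE₁]
    simp only [grp_univ_sdiff, map_add, map_sub, map_one, map_pow]
    linear_combination sum_block_mul_block_neg hgg hgD hD h1 h2 hE inr_single_one_pow_five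
  · have h₀₂ := card_block₁₂_add_card_block₂₄ (A := D 0) (B := D 2) hE₀
    have h₁₃ := card_block₁₂_add_card_block₂₄ (A := D 3) (B := D 1) hE₁
    simp only [Fin.sum_univ_four, Matrix.cons_val_zero, Matrix.cons_val_one, Matrix.cons_val_two,
      Matrix.cons_val_three, Matrix.head_cons, Matrix.tail_cons]
    omega
  · simp only [Fintype.card_prod, ZMod.card]
    push_cast
    ring

/-- product construction with `ℤ/5ℤ` from a symmetric type-`H` family
satisfying (d2) (with symmetric witnesses `E₀, E₁`) and (d5). -/
theorem product_construction_Z5 {G : Type*} [AddCommGroup G] [Fintype G] [DecidableEq G]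
    (D : Fin 4 → Finset G) (E₀ E₁ : Finset G)
    (hsym : ∀ i, IsSymmetric (D i)) (hH : IsTypeH D)
    (hE₀s : IsSymmetric E₀) (hE₁s : IsSymmetric E₁)
    (hE₀ : E₀ ⊆ Gstar G) (hE₁ : E₁ ⊆ Gstar G)
    (h1 : grp (D 0) + grp (D 1) - grp (D 2) - grp (D 3) = grp E₀ - grp (Gstar G \ E₀))
    (h2 : grp (D 0) + grp (D 3) - grp (D 1) - grp (D 2) = grp E₁ - grp (Gstar G \ E₁))
    (h3 : IsTypeH4star ![E₀, E₁, Gstar G \ E₀, Gstar G \ E₁])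
    (hd5 : (D 0).card + (D 3).card = (D 1).card + (D 2).card) :
    IsTypeH4star (G := G × ZMod 5)
      ![(D 0) ×ˢ ({1, 2} : Finset (ZMod 5)) ∪ ((Finset.univ : Finset G) \ D 2) ×ˢ {3, 4}
          ∪ (Gstar G \ E₀) ×ˢ {0},
        (D 3) ×ˢ ({1, 2} : Finset (ZMod 5)) ∪ ((Finset.univ : Finset G) \ D 1) ×ˢ {3, 4}
          ∪ (Gstar G \ E₁) ×ˢ {0},
        ((Finset.univ : Finset G) \ D 0) ×ˢ ({2, 4} : Finset (ZMod 5)) ∪ (D 2) ×ˢ {1, 3}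
          ∪ E₀ ×ˢ {0},
        ((Finset.univ : Finset G) \ D 3) ×ˢ ({2, 4} : Finset (ZMod 5)) ∪ (D 1) ×ˢ {1, 3}
          ∪ E₁ ×ˢ {0}] ∧
      ∑ i, grp ((![(D 0) ×ˢ ({1, 2} : Finset (ZMod 5)) ∪ ((Finset.univ : Finset G) \ D 2) ×ˢ {3, 4}
          ∪ (Gstar G \ E₀) ×ˢ {0},
        (D 3) ×ˢ ({1, 2} : Finset (ZMod 5)) ∪ ((Finset.univ : Finset G) \ D 1) ×ˢ {3, 4}
          ∪ (Gstar G \ E₁) ×ˢ {0},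
        ((Finset.univ : Finset G) \ D 0) ×ˢ ({2, 4} : Finset (ZMod 5)) ∪ (D 2) ×ˢ {1, 3}
          ∪ E₀ ×ˢ {0},
        ((Finset.univ : Finset G) \ D 3) ×ˢ ({2, 4} : Finset (ZMod 5)) ∪ (D 1) ×ˢ {1, 3}
          ∪ E₁ ×ˢ {0}]) i) *
        grp (negSet ((![(D 0) ×ˢ ({1, 2} : Finset (ZMod 5)) ∪ ((Finset.univ : Finset G) \ D 2) ×ˢ {3, 4}
          ∪ (Gstar G \ E₀) ×ˢ {0},
        (D 3) ×ˢ ({1, 2} : Finset (ZMod 5)) ∪ ((Finset.univ : Finset G) \ D 1) ×ˢ {3, 4}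
          ∪ (Gstar G \ E₁) ×ˢ {0},
        ((Finset.univ : Finset G) \ D 0) ×ˢ ({2, 4} : Finset (ZMod 5)) ∪ (D 2) ×ˢ {1, 3}
          ∪ E₀ ×ˢ {0},
        ((Finset.univ : Finset G) \ D 3) ×ˢ ({2, 4} : Finset (ZMod 5)) ∪ (D 1) ×ˢ {1, 3}
          ∪ E₁ ×ˢ {0}]) i)) =
      (10 * (Fintype.card G : ℤ) - 2) • AddMonoidAlgebra.single (0 : G × ZMod 5) (1 : ℤ)
        + (5 * (Fintype.card G : ℤ) - 3) • grp (Gstar (G × ZMod 5)) :=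
  product_construction_Z5_general D E₀ E₁ hsym hH hE₀s hE₁s hE₀ hE₁ h1 h2 h3
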